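/- Let a, c be real numbers with c not a nonpositive integer, and let m, n be positive integers with m ≥ n - 1. If a < c < 1 - m - n, then all n zeros of the polynomial Q_{mn}(z) = ₂F₁(-n, -a-m; -c-m-n+1; z) are real and simple and lie in the open interval (0, 1). -/

import Mathlib

/-- The Pochhammer symbol `(x)_k = x (x+1) ⋯ (x+k-1)` for a real number `x`. -/
noncomputable def poch (x : ℝ) (k : ℕ) : ℝ := ∏ i ∈ Finset.range k, (x + i)

/-- The terminating Gauss hypergeometric polynomial `₂F₁(-n, b; d; z)`
    as a real polynomial in `z`. -/
noncomputable def hypPoly (n : ℕ) (b d : ℝ) : Polynomial ℝ :=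
  ∑ k ∈ Finset.range (n + 1),
    Polynomial.C ((poch (-(n : ℝ)) k * poch b k) / (poch d k * (Nat.factorial k))) *
      Polynomial.X ^ k

/-- The denominator polynomial `Q_{mn}(z) = ₂F₁(-n, -a-m; -c-m-n+1; z)` of the
`[m/n]` Padé approximant for `₂F₁(a, 1; c; z)`. -/
noncomputable def padeDenom (m n : ℕ) (a c : ℝ) : Polynomial ℝ :=
  hypPoly n (-a - m) (-c - m - n + 1)

/-! For `F_k = ₂F₁(-k, a; c; z)` the contiguous relation
`z(1-z) F_k' + ((c-1)(1-z) - (a-c-k) z) F_k = (c-1) ₂F₁(-k-1, a-1; c-1; z)`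
says that `z^(c-1) (1-z)^(a-c-k) F_k(z)` has derivative
`(c-1) z^(c-2) (1-z)^(a-c-k-1) ₂F₁(-k-1, a-1; c-1; z)` on `(0, 1)`. When `c > 1` and `a - c > k`
the weighted function vanishes at `0`, at `1` and at the `k` zeros of `F_k` in `(0, 1)`, so Rolle's
theorem yields `k + 1` distinct zeros of the next polynomial in `(0, 1)`. Starting from
`₂F₁(0, a + n; c + n; z) = 1`, `n` such steps give `n` distinct zeros of `Q_{mn}` in `(0, 1)`;
as `Q_{mn}` has degree at most `n`, they are all of its complex zeros, and they are simple. -/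

open Polynomial

lemma poch_succ (x : ℝ) (k : ℕ) : poch x (k + 1) = poch x k * (x + k) :=
  Finset.prod_range_succ _ _

lemma poch_succ' (x : ℝ) (k : ℕ) : poch x (k + 1) = x * poch (x + 1) k := by
  simp only [poch, Finset.prod_range_succ', Nat.cast_succ, Nat.cast_zero, add_zero, add_assoc,
    add_comm (1 : ℝ), mul_comm x]

lemma poch_neg_natCast_eq_zero {n j : ℕ} (h : n < j) : poch (-(n : ℝ)) j = 0 :=
  Finset.prod_eq_zero (Finset.mem_range.mpr h) (neg_add_cancel _)

lemma poch_ne_zero {x : ℝ} {k : ℕ} (h : ∀ i < k, x + i ≠ 0) : poch x k ≠ 0 :=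
  Finset.prod_ne_zero_iff.mpr fun i hi => h i (Finset.mem_range.mp hi)

lemma hypPoly_coeff (n : ℕ) (b d : ℝ) (j : ℕ) :
    (hypPoly n b d).coeff j = poch (-(n : ℝ)) j * poch b j / (poch d j * j.factorial) := by
  rw [hypPoly, finsetSum_coeff]
  simp only [coeff_C_mul_X_pow]
  rw [Finset.sum_ite_eq]
  split_ifs with hj
  · rfl
  · rw [poch_neg_natCast_eq_zero (by simpa using hj), zero_mul, zero_div]

lemma hypPoly_coeff_zero (n : ℕ) (b d : ℝ) : (hypPoly n b d).coeff 0 = 1 := by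
  simp [hypPoly_coeff, poch]

lemma natDegree_hypPoly_le (n : ℕ) (b d : ℝ) : (hypPoly n b d).natDegree ≤ n :=
  natDegree_sum_le_of_forall_le _ _ fun _ hk =>
    (natDegree_C_mul_X_pow_le _ _).trans (Nat.lt_succ_iff.mp (Finset.mem_range.mp hk))

lemma hypPoly_ne_zero (n : ℕ) (b d : ℝ) : hypPoly n b d ≠ 0 := fun h => by
  simpa [h] using hypPoly_coeff_zero n b d

lemma hypPoly_coeff_contiguous (k : ℕ) (a c : ℝ) (hc1 : c ≠ 1) (hc : ∀ i ≤ k, c + i ≠ 0)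
    (j : ℕ) :
    (j + c) * (hypPoly k a c).coeff (j + 1) - (j + a - 1 - k) * (hypPoly k a c).coeff j =
      (c - 1) * (hypPoly (k + 1) (a - 1) (c - 1)).coeff (j + 1) := by
  simp only [hypPoly_coeff]
  rcases le_or_gt j k with hj | hj
  · have hpoch : poch c j ≠ 0 := poch_ne_zero fun i hi => hc i (by omega)
    have hcj : c + j ≠ 0 := hc j hj
    have hc1' : c - 1 ≠ 0 := sub_ne_zero.mpr hc1
    rw [poch_succ (-(k : ℝ)), poch_succ a, poch_succ c, poch_succ', poch_succ' (a - 1),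
      poch_succ' (c - 1), show -((k + 1 : ℕ) : ℝ) + 1 = -k by push_cast; ring,
      sub_add_cancel, sub_add_cancel, Nat.factorial_succ]
    push_cast
    field_simp
    ring
  · rw [poch_neg_natCast_eq_zero hj, poch_neg_natCast_eq_zero (by omega : k < j + 1),
      poch_neg_natCast_eq_zero (by omega : k + 1 < j + 1)]
    simp

lemma coeff_succ_X_mul_one_sub_X_mul_derivative_add (F : ℝ[X]) (α β : ℝ) (j : ℕ) :
    (X * (1 - X) * derivative F + (C α * (1 - X) - C β * X) * F).coeff (j + 1) =
      (j + 1 + α) * F.coeff (j + 1) - (j + α + β) * F.coeff j := by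
  have h : X * (1 - X) * derivative F + (C α * (1 - X) - C β * X) * F =
      C α * F + X * (derivative F - X * derivative F - C (α + β) * F) := by
    simp only [C_add]; ring
  rw [h]
  rcases j with _ | j
  · simp only [coeff_add, coeff_C_mul, coeff_X_mul, coeff_sub, coeff_derivative, mul_coeff_zero,
      coeff_X_zero, CharP.cast_eq_zero, zero_add, mul_one, zero_mul, sub_zero, map_add,
      coeff_C_zero]
    ring
  · simp only [coeff_add, coeff_C_mul, coeff_X_mul, coeff_sub, coeff_derivative, map_add,
      add_mul, Nat.cast_add, Nat.cast_one, one_mul]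
    ring

lemma coeff_zero_X_mul_one_sub_X_mul_derivative_add (F : ℝ[X]) (α β : ℝ) :
    (X * (1 - X) * derivative F + (C α * (1 - X) - C β * X) * F).coeff 0 = α * F.coeff 0 := by
  simp

theorem hypPoly_contiguous (k : ℕ) (a c : ℝ) (hc1 : c ≠ 1) (hc : ∀ i ≤ k, c + i ≠ 0) :
    X * (1 - X) * derivative (hypPoly k a c) +
        (C (c - 1) * (1 - X) - C (a - c - k) * X) * hypPoly k a c =
      C (c - 1) * hypPoly (k + 1) (a - 1) (c - 1) := by
  ext (_ | j)
  · rw [coeff_zero_X_mul_one_sub_X_mul_derivative_add, coeff_C_mul, hypPoly_coeff_zero,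
      hypPoly_coeff_zero]
  · rw [coeff_succ_X_mul_one_sub_X_mul_derivative_add, coeff_C_mul,
      ← hypPoly_coeff_contiguous k a c hc1 hc]
    ring

theorem exists_finset_deriv_eq_zero {f : ℝ → ℝ} (hf : Continuous f) (T : Finset ℝ) :
    ∀ {l r : ℝ}, (∀ x ∈ T, x ∈ Set.Icc l r ∧ f x = 0) →
      ∃ U : Finset ℝ, U.card = T.card - 1 ∧ ∀ u ∈ U, u ∈ Set.Ioo l r ∧ deriv f u = 0 := by
  induction T using Finset.induction_on_max with
  | empty => exact fun _ => ⟨∅, by simp, by simp⟩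
  | insert y T hlt ih =>
    intro l r hT
    rcases T.eq_empty_or_nonempty with rfl | hne
    · exact ⟨∅, by simp, by simp⟩
    set x := T.max' hne
    have hxT : x ∈ T := T.max'_mem hne
    have hxy : x < y := hlt x hxT
    obtain ⟨⟨hly, hyr⟩, hfy⟩ := hT y (Finset.mem_insert_self y T)
    obtain ⟨⟨hlx, -⟩, hfx⟩ := hT x (Finset.mem_insert_of_mem hxT)
    obtain ⟨z, hz, hdz⟩ := exists_deriv_eq_zero hxy hf.continuousOn (hfx.trans hfy.symm)
    obtain ⟨U, hUcard, hU⟩ := ih (l := l) (r := x) fun t ht =>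
      ⟨⟨(hT t (Finset.mem_insert_of_mem ht)).1.1, T.le_max' t ht⟩,
        (hT t (Finset.mem_insert_of_mem ht)).2⟩
    have hzU : z ∉ U := fun h => (hU z h).1.2.not_gt hz.1
    refine ⟨insert z U, ?_, ?_⟩
    · rw [Finset.card_insert_of_notMem hzU, hUcard,
        Finset.card_insert_of_notMem fun h => (hlt y h).false]
      have := hne.card_pos
      omega
    · intro u hu
      rcases Finset.mem_insert.mp hu with rfl | hu
      · exact ⟨⟨hlx.trans_lt hz.1, hz.2.trans_le hyr⟩, hdz⟩
      · obtain ⟨⟨hlu, hux⟩, hdu⟩ := hU u hu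
        exact ⟨⟨hlu, hux.trans (hxy.trans_le hyr)⟩, hdu⟩

lemma hasDerivAt_rpow_mul_one_sub_rpow_mul_eval (F : ℝ[X]) (p q : ℝ) {u : ℝ}
    (hu : u ∈ Set.Ioo 0 1) :
    HasDerivAt (fun z => z ^ p * (1 - z) ^ q * F.eval z)
      (u ^ (p - 1) * (1 - u) ^ (q - 1) *
        (X * (1 - X) * derivative F + (C p * (1 - X) - C q * X) * F).eval u) u := by
  have hu0 : u ≠ 0 := hu.1.ne'
  have hu1 : 1 - u ≠ 0 := (sub_pos.mpr hu.2).ne'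
  have hd1 : HasDerivAt (fun z : ℝ => z ^ p) (p * u ^ (p - 1)) u :=
    Real.hasDerivAt_rpow_const (Or.inl hu0)
  have hd2 : HasDerivAt (fun z : ℝ => (1 - z) ^ q) (q * (1 - u) ^ (q - 1) * -1) u :=
    (Real.hasDerivAt_rpow_const (Or.inl hu1)).comp u ((hasDerivAt_id u).const_sub 1)
  refine ((hd1.fun_mul hd2).fun_mul (F.hasDerivAt u)).congr_deriv ?_
  rw [Real.rpow_sub_one hu0, Real.rpow_sub_one hu1]
  simp only [eval_add, eval_mul, eval_sub, eval_X, eval_one, eval_C]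
  field_simp
  ring

lemma continuous_rpow_mul_one_sub_rpow_mul_eval (F : ℝ[X]) {p q : ℝ} (hp : 0 ≤ p) (hq : 0 ≤ q) :
    Continuous fun z : ℝ => z ^ p * (1 - z) ^ q * F.eval z :=
  ((Real.continuous_rpow_const hp).mul
    ((Real.continuous_rpow_const hq).comp (continuous_const.sub continuous_id))).mul F.continuous

theorem exists_roots_hypPoly_succ {k : ℕ} {a c : ℝ} (hc : 1 < c) (hac : k < a - c)
    {S : Finset ℝ} (hcard : S.card = k)
    (hS : ∀ x ∈ S, x ∈ Set.Ioo 0 1 ∧ (hypPoly k a c).IsRoot x) :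
    ∃ S' : Finset ℝ, S'.card = k + 1 ∧
      ∀ x ∈ S', x ∈ Set.Ioo 0 1 ∧ (hypPoly (k + 1) (a - 1) (c - 1)).IsRoot x := by
  have hp : 0 < c - 1 := sub_pos.mpr hc
  have hq : 0 < a - c - k := sub_pos.mpr hac
  set f := fun z : ℝ => z ^ (c - 1) * (1 - z) ^ (a - c - k) * (hypPoly k a c).eval z
  have hT : ∀ x ∈ insert 0 (insert 1 S), x ∈ Set.Icc 0 1 ∧ f x = 0 := by
    intro x hx
    rcases Finset.mem_insert.mp hx with rfl | hx
    · simp [f, Real.zero_rpow hp.ne']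
    rcases Finset.mem_insert.mp hx with rfl | hx
    · simp [f, Real.zero_rpow hq.ne']
    · exact ⟨Set.Ioo_subset_Icc_self (hS x hx).1, by simp [f, (hS x hx).2.eq_zero]⟩
  obtain ⟨U, hUcard, hU⟩ :=
    exists_finset_deriv_eq_zero (continuous_rpow_mul_one_sub_rpow_mul_eval _ hp.le hq.le) _ hT
  refine ⟨U, ?_, fun u hu => ⟨(hU u hu).1, ?_⟩⟩
  · rw [hUcard, Finset.card_insert_of_notMem, Finset.card_insert_of_notMem, hcard]
    · omega
    · exact fun h => (hS 1 h).1.2.false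
    · simp only [Finset.mem_insert, zero_ne_one, false_or]
      exact fun h => (hS 0 h).1.1.false
  obtain ⟨hu, hdu⟩ := hU u hu
  have hcontiguous := hypPoly_contiguous k a c hc.ne' fun i _ => by positivity
  have hderiv :=
    (hasDerivAt_rpow_mul_one_sub_rpow_mul_eval (hypPoly k a c) _ _ hu).deriv.symm.trans hdu
  rw [hcontiguous] at hderiv
  simpa [IsRoot, hp.ne', (Real.rpow_pos_of_pos hu.1 _).ne',
    (Real.rpow_pos_of_pos (sub_pos.mpr hu.2) _).ne'] using hderiv

theorem exists_roots_hypPoly_mem_Ioo (n : ℕ) :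
    ∀ {a c : ℝ}, 0 < c → (n : ℝ) - 1 < a - c →
      ∃ S : Finset ℝ, S.card = n ∧ ∀ x ∈ S, x ∈ Set.Ioo 0 1 ∧ (hypPoly n a c).IsRoot x := by
  induction n with
  | zero => exact fun _ _ => ⟨∅, rfl, by simp⟩
  | succ n ih =>
    intro a c hc hac
    push_cast at hac
    obtain ⟨S, hcard, hS⟩ := ih (a := a + 1) (c := c + 1) (by linarith) (by linarith)
    simpa only [add_sub_cancel_right] using
      exists_roots_hypPoly_succ (by linarith) (by linarith) hcard hS

theorem Polynomial.roots_map_eq_of_natDegree_le_card {K L : Type*} [Field K] [Field L]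
    (f : K →+* L) {p : K[X]} {S : Finset K} (hS : ∀ x ∈ S, p.IsRoot x)
    (hdeg : p.natDegree ≤ S.card) (hp : p ≠ 0) : (p.map f).roots = S.val.map f := by
  have hroots := roots_eq_of_natDegree_le_card_of_ne_zero hS hdeg hp
  rw [← roots_map_of_injective_of_card_eq_natDegree f.injective, hroots]
  exact (card_roots' p).antisymm (hroots ▸ hdeg)

theorem pade_poles_6_general (a c : ℝ)
    (m n : ℕ)
    (hac : a < c) (hc1 : c < 1 - m - n) :
    ∃ S : Finset ℝ, S.card = n ∧ (∀ x ∈ S, x ∈ Set.Ioo (0 : ℝ) 1) ∧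
      ((padeDenom m n a c).map (algebraMap ℝ ℂ)).roots = S.val.map (fun x => (x : ℂ)) := by
  obtain ⟨S, hcard, hS⟩ :=
    exists_roots_hypPoly_mem_Ioo n (a := -a - m) (c := -c - m - n + 1) (by linarith) (by linarith)
  refine ⟨S, hcard, fun x hx => (hS x hx).1, ?_⟩
  rw [padeDenom, roots_map_eq_of_natDegree_le_card (algebraMap ℝ ℂ) (fun x hx => (hS x hx).2)
    (hcard ▸ natDegree_hypPoly_le _ _ _) (hypPoly_ne_zero _ _ _)]
  simp

/-- If `a < c < 1 - m - n`, all `n` zeros of `Q_{mn}` are real, simple and lie in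
`(0, 1)`. -/
theorem pade_poles_6 (a c : ℝ) (hc : ∀ k : ℕ, c ≠ -(k : ℝ))
    (m n : ℕ) (hm : 0 < m) (hn : 0 < n) (hmn : n - 1 ≤ m)
    (hac : a < c) (hc1 : c < 1 - m - n) :
    ∃ S : Finset ℝ, S.card = n ∧ (∀ x ∈ S, x ∈ Set.Ioo (0 : ℝ) 1) ∧
      ((padeDenom m n a c).map (algebraMap ℝ ℂ)).roots = S.val.map (fun x => (x : ℂ)) :=
  pade_poles_6_general a c m n hac hc1
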